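/- arXiv:1705.05675 — 2 statements merged into one kernel-verified Lean document; each statement's English description precedes it below -/
import Mathlib

section
/- For all natural numbers a, b, c, d, n, we have ∑_{k=0}^{n} C(a,k)·C(b,n−k)·C(k,c)·C(n−k,d) = C(a+b−c−d, n−c−d)·C(a,c)·C(b,d). -/
/-!
Since `C(a,k) C(k,c) = C(a,c) C(a-c,k-c)`, the generating polynomial `∑ₖ C(a,k) C(k,c) Xᵏ` is
`C(a,c) Xᶜ (1+X)^(a-c)`. The sum in the theorem is the coefficient of `Xⁿ` in the product of two
such polynomials, `C(a,c) C(b,d) X^(c+d) (1+X)^(a-c+b-d)`, which is the right-hand side.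
-/

/-- Binomial coefficient for integers: `C x y` is the usual binomial coefficient
when `0 ≤ y ≤ x`, and `0` otherwise. -/
def C (x y : ℤ) : ℤ := if 0 ≤ y ∧ y ≤ x then (x.toNat.choose y.toNat : ℤ) else 0

lemma C_natCast (m l : ℕ) : C m l = m.choose l := by
  unfold C
  split_ifs with h
  · simp
  · rw [Nat.choose_eq_zero_of_lt (by omega), Nat.cast_zero]

lemma C_of_neg (x : ℤ) {y : ℤ} (hy : y < 0) : C x y = 0 :=
  if_neg fun h => by omega

open Polynomial (X coeff)

lemma coeff_choose_mul_X_pow_mul_one_add_X_pow (a c k : ℕ) :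
    (Polynomial.C (a.choose c) * X ^ c * (1 + X) ^ (a - c)).coeff k = a.choose k * k.choose c := by
  rw [mul_assoc, Polynomial.coeff_C_mul, Polynomial.coeff_X_pow_mul']
  split_ifs with hck
  · rw [Polynomial.coeff_one_add_X_pow, Nat.choose_mul hck, Nat.cast_id]
  · rw [Nat.choose_eq_zero_of_lt (not_le.mp hck), mul_zero, mul_zero]

lemma sum_choose_mul_choose_mul_choose_mul_choose (a b c d n : ℕ) :
    ∑ k ∈ Finset.range (n + 1), a.choose k * b.choose (n - k) * k.choose c * (n - k).choose d =
      a.choose c * b.choose d * if c + d ≤ n then (a - c + (b - d)).choose (n - (c + d)) else 0 := by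
  have hprod := congrArg (coeff · n) <|
    show (Polynomial.C (a.choose c) * X ^ c * (1 + X) ^ (a - c)) *
        (Polynomial.C (b.choose d) * X ^ d * (1 + X) ^ (b - d)) =
      Polynomial.C (a.choose c * b.choose d) * (X ^ (c + d) * (1 + X) ^ (a - c + (b - d))) by
    simp only [map_mul, pow_add]; ring
  rw [Polynomial.coeff_mul, Finset.Nat.sum_antidiagonal_eq_sum_range_succ_mk,
    Polynomial.coeff_C_mul, Polynomial.coeff_X_pow_mul'] at hprod
  simp only [coeff_choose_mul_X_pow_mul_one_add_X_pow, Polynomial.coeff_one_add_X_pow,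
    Nat.cast_id, mul_ite, mul_zero] at hprod
  rw [mul_ite, mul_zero, ← hprod]
  exact Finset.sum_congr rfl fun k _ => by ring

theorem stmt_0 (a b c d n : ℕ) :
    ∑ k ∈ Finset.range (n + 1), C a k * C b ((n : ℤ) - k) * C k c * C ((n : ℤ) - k) d = C ((a : ℤ) + b - c - d) ((n : ℤ) - c - d) * C a c * C b d := by
  have hlhs : ∀ k ∈ Finset.range (n + 1),
      C a k * C b ((n : ℤ) - k) * C k c * C ((n : ℤ) - k) d =
        ((a.choose k * b.choose (n - k) * k.choose c * (n - k).choose d : ℕ) : ℤ) := by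
    intro k hk
    rw [← Nat.cast_sub (Finset.mem_range_succ_iff.mp hk)]
    simp only [C_natCast, Nat.cast_mul]
  rw [Finset.sum_congr rfl hlhs, ← Nat.cast_sum, sum_choose_mul_choose_mul_choose_mul_choose,
    C_natCast, C_natCast]
  rcases Nat.lt_or_ge a c with hac | hca
  · simp [Nat.choose_eq_zero_of_lt hac]
  rcases Nat.lt_or_ge b d with hbd | hdb
  · simp [Nat.choose_eq_zero_of_lt hbd]
  split_ifs with hn
  · rw [show (a : ℤ) + b - c - d = ((a - c + (b - d) : ℕ) : ℤ) by omega,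
      show (n : ℤ) - c - d = ((n - (c + d) : ℕ) : ℤ) by omega, C_natCast]
    push_cast; ring
  · rw [C_of_neg _ (by omega)]
    simp
end

section
/- For all natural numbers a, c, d, n, p, we have ∑_{k=0}^{a} C(a,k)·C(c+d−a, p+k)·C(k,c)·C(n−k,d) = C(n+a+p−c−d, a+p)·C(n−a, d−a−p)·C(a,c). -/
open Finset

theorem C_eq_zero_iff {x y : ℤ} : C x y = 0 ↔ y < 0 ∨ x < y := by
  unfold C
  split_ifs with h
  · rw [Nat.cast_eq_zero, Nat.choose_eq_zero_iff]
    omega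
  · simp only [true_iff]
    omega

theorem C_natCast_s3 (x y : ℕ) : C x y = x.choose y := by
  simp only [C, Nat.cast_nonneg, Nat.cast_le, true_and, Int.toNat_natCast]
  split_ifs with h
  · rfl
  · rw [Nat.choose_eq_zero_of_lt (by omega), Nat.cast_zero]

theorem C_symm (x y : ℤ) : C x (x - y) = C x y := by
  by_cases h : 0 ≤ y ∧ y ≤ x
  · lift x to ℕ using by omega
    lift y to ℕ using h.1
    rw [← Nat.cast_sub (by omega), C_natCast_s3, C_natCast_s3, Nat.choose_symm (by omega)]
  · rw [C_eq_zero_iff.2 (by omega), C_eq_zero_iff.2 (by omega)]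

theorem C_mul (x k m : ℤ) : C x k * C k m = C x m * C (x - m) (k - m) := by
  by_cases h : 0 ≤ m ∧ m ≤ k ∧ k ≤ x
  · lift x to ℕ using by omega
    lift k to ℕ using by omega
    lift m to ℕ using h.1
    rw [← Nat.cast_sub (by omega), ← Nat.cast_sub (by omega)]
    simp only [C_natCast_s3]
    exact_mod_cast Nat.choose_mul (by omega)
  · have hl : C x k * C k m = 0 := by
      simp only [mul_eq_zero, C_eq_zero_iff]; omega
    have hr : C x m * C (x - m) (k - m) = 0 := by
      simp only [mul_eq_zero, C_eq_zero_iff]; omega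
    rw [hl, hr]

theorem C_mul_C_sub_comm (x i j : ℤ) : C x i * C (x - i) j = C x j * C (x - j) i := by
  have key (i j : ℤ) : C x (i + j) * C (i + j) i = C x i * C (x - i) j := by
    rw [C_mul, add_sub_cancel_left]
  rw [← key, ← key, add_comm j i, ← C_symm (i + j) i, add_sub_cancel_left]

theorem sum_Icc_zero_eq_sum_range_natCast {M : Type*} [AddCommMonoid M] (n : ℕ) (f : ℤ → M) :
    ∑ j ∈ Icc (0 : ℤ) n, f j = ∑ k ∈ range (n + 1), f k := by
  rw [Int.Icc_eq_finset_map, sum_map]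
  simp

theorem sum_C_mul_C_sub {x y : ℤ} (hx : 0 ≤ x) (hy : 0 ≤ y) (m : ℤ) {s : Finset ℤ}
    (hs : Icc 0 x ⊆ s) : ∑ j ∈ s, C x j * C y (m - j) = C (x + y) m := by
  rcases lt_or_ge m 0 with hm | hm
  · rw [C_eq_zero_iff.2 (Or.inl hm)]
    refine sum_eq_zero fun j _ => ?_
    simp only [mul_eq_zero, C_eq_zero_iff]
    omega
  have support : ∀ j, C x j * C y (m - j) ≠ 0 → j ∈ Icc 0 x ∩ Icc 0 m := by
    intro j hj
    simp only [ne_eq, mul_eq_zero, C_eq_zero_iff, not_or, not_lt] at hj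
    simp only [mem_inter, mem_Icc]
    omega
  have vanish {t : Finset ℤ} : ∀ j ∈ t, j ∉ Icc 0 x ∩ Icc 0 m → C x j * C y (m - j) = 0 :=
    fun j _ hj => not_not.1 (mt (support j) hj)
  lift x to ℕ using hx
  lift y to ℕ using hy
  lift m to ℕ using hm
  calc ∑ j ∈ s, C x j * C y (m - j)
      = ∑ j ∈ Icc 0 (x : ℤ) ∩ Icc 0 (m : ℤ), C x j * C y (m - j) :=
        (sum_subset (inter_subset_left.trans hs) vanish).symm
    _ = ∑ j ∈ Icc 0 (m : ℤ), C x j * C y (m - j) := sum_subset inter_subset_right vanish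
    _ = ∑ k ∈ range (m + 1), ((x.choose k * y.choose (m - k) : ℕ) : ℤ) := by
        rw [sum_Icc_zero_eq_sum_range_natCast]
        refine sum_congr rfl fun k hk => ?_
        rw [← Nat.cast_sub (by simp at hk; omega), C_natCast_s3, C_natCast_s3, Nat.cast_mul]
    _ = C (x + y : ℕ) m := by
        rw [C_natCast_s3, Nat.add_choose_eq, Nat.sum_antidiagonal_eq_sum_range_succ_mk, Nat.cast_sum]
    _ = C ((x : ℤ) + y) m := by rw [Nat.cast_add]

theorem sum_C_sub_mul_C_sub {x y : ℤ} (hx : 0 ≤ x) (hy : 0 ≤ y) (t m : ℤ) {s : Finset ℤ}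
    (hs : Icc t (t + x) ⊆ s) : ∑ j ∈ s, C x (j - t) * C y (m - j) = C (x + y) (m - t) := by
  have h := sum_C_mul_C_sub hx hy (m - t) (s := s.map (Equiv.subRight t).toEmbedding) ?_
  · simpa only [sum_map, Equiv.coe_toEmbedding, Equiv.subRight_apply,
      sub_sub_sub_cancel_right] using h
  · intro j hj
    rw [mem_Icc] at hj
    exact mem_map.2 ⟨j + t, hs (mem_Icc.2 (by omega)), by simp⟩

section

variable {a c d n p : ℤ}

theorem sum_C_sub_mul_C_sub_mul_C_add (hc : 0 ≤ c) (had : a ≤ c + d) (i : ℤ) (hi : 0 ≤ i) :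
    ∑ k ∈ Icc 0 a, C (a - c) (k - c) * C (a - k) i * C (c + d - a) (p + k) =
      C (a - c) i * C (d - i) (d - a - p) := by
  rcases le_or_gt i (a - c) with hia | hia
  · calc ∑ k ∈ Icc 0 a, C (a - c) (k - c) * C (a - k) i * C (c + d - a) (p + k)
        = ∑ k ∈ Icc 0 a,
            C (a - c) i * (C (a - c - i) (k - c) * C (c + d - a) (d - a - p + c - k)) := by
          refine sum_congr rfl fun k _ => ?_
          rw [← C_symm (c + d - a), show a - k = a - c - (k - c) by ring, C_mul_C_sub_comm,
            show c + d - a - (p + k) = d - a - p + c - k by ring, mul_assoc]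
      _ = C (a - c) i * C (d - i) (d - a - p) := by
          rw [← mul_sum, sum_C_sub_mul_C_sub (by omega) (by omega),
            show a - c - i + (c + d - a) = d - i by ring, add_sub_cancel_right]
          intro k hk
          simp only [mem_Icc] at hk ⊢
          omega
  · rw [C_eq_zero_iff.2 (Or.inr hia), zero_mul]
    refine sum_eq_zero fun k hk => ?_
    simp only [mem_Icc] at hk
    simp only [mul_eq_zero, C_eq_zero_iff]
    omega

/-- The factor `C (n - a) (d - a - p)` vanishes when `n + p < d`, the case where Vandermonde's
identity is not available. -/
theorem C_mul_sum_C_mul_C_sub (hc : 0 ≤ c) (hca : c ≤ a) :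
    C (n - a) (d - a - p) * ∑ i ∈ Icc 0 a, C (a - c) i * C (n + p - d) (a + p - i) =
      C (n - a) (d - a - p) * C (n + a + p - c - d) (a + p) := by
  rcases le_or_gt d (n + p) with hd | hd
  · rw [sum_C_mul_C_sub (by omega) (by omega), show a - c + (n + p - d) = n + a + p - c - d by ring]
    intro i hi
    simp only [mem_Icc] at hi ⊢
    omega
  · rw [C_eq_zero_iff.2 (Or.inr (by omega)), zero_mul, zero_mul]

theorem sum_C_sub_mul_C_add_mul_C_sub_of_le (hc : 0 ≤ c) (hca : c ≤ a) (had : a ≤ c + d)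
    (han : a ≤ n) :
    ∑ k ∈ Icc 0 a, C (a - c) (k - c) * C (c + d - a) (p + k) * C (n - k) d =
      C (n + a + p - c - d) (a + p) * C (n - a) (d - a - p) := by
  have expand : ∀ k ∈ Icc 0 a, C (n - k) d = ∑ i ∈ Icc 0 a, C (a - k) i * C (n - a) (d - i) := by
    intro k hk
    rw [mem_Icc] at hk
    rw [sum_C_mul_C_sub (by omega) (by omega), sub_add_sub_cancel']
    intro i hi
    simp only [mem_Icc] at hi ⊢
    omega
  calc ∑ k ∈ Icc 0 a, C (a - c) (k - c) * C (c + d - a) (p + k) * C (n - k) d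
      = ∑ i ∈ Icc 0 a, (∑ k ∈ Icc 0 a, C (a - c) (k - c) * C (a - k) i * C (c + d - a) (p + k))
          * C (n - a) (d - i) := by
        rw [sum_congr rfl fun k hk => by rw [expand k hk]]
        simp only [mul_sum, sum_mul]
        rw [sum_comm]
        refine sum_congr rfl fun i _ => sum_congr rfl fun k _ => by ring
    _ = ∑ i ∈ Icc 0 a, C (n - a) (d - a - p) * (C (a - c) i * C (n + p - d) (a + p - i)) := by
        refine sum_congr rfl fun i hi => ?_
        rw [sum_C_sub_mul_C_sub_mul_C_add hc had i (mem_Icc.1 hi).1, mul_assoc,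
          mul_comm (C (d - i) _), C_mul, show n - a - (d - a - p) = n + p - d by ring,
          show d - i - (d - a - p) = a + p - i by ring]
        ring
    _ = C (n + a + p - c - d) (a + p) * C (n - a) (d - a - p) := by
        rw [← mul_sum, C_mul_sum_C_mul_C_sub hc hca, mul_comm]

theorem sum_C_mul_C_mul_C_mul_C (hc : 0 ≤ c) (hp : 0 ≤ p) :
    ∑ k ∈ Icc 0 a, C a k * C (c + d - a) (p + k) * C k c * C (n - k) d =
      C (n + a + p - c - d) (a + p) * C (n - a) (d - a - p) * C a c := by
  have revise : ∀ k, C a k * C (c + d - a) (p + k) * C k c * C (n - k) d =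
      C a c * (C (a - c) (k - c) * C (c + d - a) (p + k) * C (n - k) d) := by
    intro k
    rw [mul_right_comm (C a k), C_mul]
    ring
  rw [sum_congr rfl fun k _ => revise k, ← mul_sum, mul_comm _ (C a c)]
  by_cases hca : c ≤ a
  swap
  · rw [C_eq_zero_iff.2 (by omega), zero_mul, zero_mul]
  congr 1
  by_cases h : a ≤ c + d ∧ a ≤ n
  · exact sum_C_sub_mul_C_add_mul_C_sub_of_le hc hca h.1 h.2
  · rw [C_eq_zero_iff.2 (by omega : d - a - p < 0 ∨ n - a < d - a - p), mul_zero]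
    refine sum_eq_zero fun k hk => ?_
    simp only [mem_Icc] at hk
    simp only [mul_eq_zero, C_eq_zero_iff]
    omega

end

theorem stmt_3 (a c d n p : ℕ) :
    ∑ k ∈ Finset.range (a + 1), C a k * C ((c : ℤ) + d - a) ((p : ℤ) + k) * C k c * C ((n : ℤ) - k) d = C ((n : ℤ) + a + p - c - d) ((a : ℤ) + p) * C ((n : ℤ) - a) ((d : ℤ) - a - p) * C a c := by
  have h := sum_C_mul_C_mul_C_mul_C (a := a) (c := c) (d := d) (n := n) (p := p)
    (by positivity) (by positivity)
  rwa [sum_Icc_zero_eq_sum_range_natCast] at h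
end
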